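/- Suppose events E_1,...,E_n and graph G satisfy the lopsidependency condition Pr[E_i | ∩_{j∈J} ¬E_j] ≤ p_i for all J ⊆ [n]∖Γ⁺(i), and there exist y_1,...,y_n > 0 with p_i ≤ y_i / Y_{Γ⁺(i)} for each i, where Y_S = Σ_{I⊆S, I∈Ind(G)} ∏_{i∈I} y_i. Then for every a ∈ S ⊆ [n], P̆_S > 0 and P̆_S / P̆_{S∖{a}} ≥ Y_{S^c} / Y_{(S∖{a})^c}, where S^c = [n]∖S and P̆_S = Pr[∩_{i∈S} ¬E_i]. -/

import Mathlib

/-! Write `P̆_S` for the probability that no `E_i`, `i ∈ S`, occurs. By strong induction on `S`,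
`P̆_S > 0` and `S ↦ P̆_S / Y_{Sᶜ}` is monotone. To compare `S` with `T = S ∖ {a}`: the outcomes
counted in `P̆_T` but not in `P̆_S` lie in `E_a ∩ ⋂_{i ∈ D} ¬E_i` with `D = S ∖ Γ⁺(a) ⊆ T`, of
probability at most `p_a P̆_D ≤ p_a P̆_T Y_{Dᶜ} / Y_{Tᶜ}` by lopsidependency and monotonicity below
`T`. Then `Y_{Dᶜ} ≤ Y_{Sᶜ ∖ Γ⁺(a)} Y_{Γ⁺(a)}`, `p_a Y_{Γ⁺(a)} ≤ y_a` and the recursion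
`Y_{Tᶜ} = Y_{Sᶜ} + y_a Y_{Sᶜ ∖ Γ⁺(a)}` give exactly `P̆_T Y_{Sᶜ} ≤ P̆_S Y_{Tᶜ}`. -/

open Finset MeasureTheory

/-- `I` is an independent set of `G`. -/
def Indep {n : ℕ} (G : SimpleGraph (Fin n)) (I : Finset (Fin n)) : Prop :=
  ∀ i ∈ I, ∀ j ∈ I, ¬ G.Adj i j

instance {n : ℕ} (G : SimpleGraph (Fin n)) [DecidableRel G.Adj] (I : Finset (Fin n)) :
    Decidable (Indep G I) := by unfold Indep; infer_instance

/-- Closed neighborhood `Γ⁺(a)`. -/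
def Gp {n : ℕ} (G : SimpleGraph (Fin n)) [DecidableRel G.Adj] (a : Fin n) : Finset (Fin n) :=
  insert a (G.neighborFinset a)

/-- Shearer coefficient `q̆_S`. -/
def qb {n : ℕ} (G : SimpleGraph (Fin n)) [DecidableRel G.Adj] (p : Fin n → ℝ)
    (S : Finset (Fin n)) : ℝ :=
  ∑ I ∈ S.powerset.filter (fun I => Indep G I), (-1 : ℝ) ^ I.card * ∏ i ∈ I, p i

/-- Cluster-expansion polynomial `Y_S`. -/
def Yf {n : ℕ} (G : SimpleGraph (Fin n)) [DecidableRel G.Adj] (y : Fin n → ℝ)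
    (S : Finset (Fin n)) : ℝ :=
  ∑ I ∈ S.powerset.filter (fun I => Indep G I), ∏ i ∈ I, y i

lemma Indep.mono {n : ℕ} {G : SimpleGraph (Fin n)} {I J : Finset (Fin n)} (hJ : Indep G J)
    (hIJ : I ⊆ J) : Indep G I :=
  fun i hi j hj => hJ i (hIJ hi) j (hIJ hj)

section IndependentSets

variable {n : ℕ} (G : SimpleGraph (Fin n)) [DecidableRel G.Adj]

lemma sdiff_Gp_subset_erase (S : Finset (Fin n)) (a : Fin n) :
    S \ Gp G a ⊆ S.erase a :=
  fun _ hi => mem_erase.2 ⟨(ne_of_mem_of_not_mem (mem_insert_self a _) (mem_sdiff.1 hi).2).symm,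
    (mem_sdiff.1 hi).1⟩

lemma indep_insert_iff {a : Fin n} {I : Finset (Fin n)} (ha : a ∉ I) :
    Indep G (insert a I) ↔ Indep G I ∧ Disjoint I (Gp G a) := by
  simp only [Indep, Gp, disjoint_left, mem_insert, SimpleGraph.mem_neighborFinset]
  constructor
  · intro h
    exact ⟨fun i hi j hj => h i (.inr hi) j (.inr hj), fun j hj hja =>
      hja.elim (fun e => ha (e ▸ hj)) (h a (.inl rfl) j (.inr hj))⟩
  · rintro ⟨hI, hdisj⟩ i hi j hj
    rcases hi with rfl | hi <;> rcases hj with rfl | hj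
    · exact G.irrefl
    · exact fun hadj => hdisj hj (.inr hadj)
    · exact fun hadj => hdisj hi (.inr hadj.symm)
    · exact hI i hi j hj

variable {y : Fin n → ℝ}

lemma one_le_Yf (hy : ∀ i, 0 ≤ y i) (S : Finset (Fin n)) : 1 ≤ Yf G y S := by
  have hempty : ∅ ∈ S.powerset.filter (fun I => Indep G I) :=
    mem_filter.2 ⟨empty_mem_powerset S, by simp [Indep]⟩
  simpa [Yf] using
    single_le_sum (f := fun I => ∏ i ∈ I, y i) (fun I _ => prod_nonneg fun i _ => hy i) hempty

lemma Yf_pos (hy : ∀ i, 0 ≤ y i) (S : Finset (Fin n)) : 0 < Yf G y S :=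
  zero_lt_one.trans_le (one_le_Yf G hy S)

lemma Yf_insert {a : Fin n} {S : Finset (Fin n)} (ha : a ∉ S) :
    Yf G y (insert a S) = Yf G y S + y a * Yf G y (S \ Gp G a) := by
  have hfilter : S.powerset.filter (fun I => Indep G (insert a I)) =
      (S \ Gp G a).powerset.filter (fun I => Indep G I) := by
    ext I
    simp only [mem_filter, mem_powerset, subset_sdiff, and_assoc]
    exact and_congr_right fun hIS => (indep_insert_iff G fun h => ha (hIS h)).trans and_comm
  rw [Yf, sum_filter, sum_powerset_insert ha, ← sum_filter, ← sum_filter, Yf, Yf, ← hfilter, mul_sum]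
  congr 1
  refine sum_congr rfl fun I hI => prod_insert fun haI => ha ?_
  exact mem_powerset.1 (mem_filter.1 hI).1 haI

lemma Yf_union_le_mul (hy : ∀ i, 0 ≤ y i) {A B : Finset (Fin n)} (hAB : Disjoint A B) :
    Yf G y (A ∪ B) ≤ Yf G y A * Yf G y B := by
  set F : Finset (Fin n) → Finset (Finset (Fin n)) := fun S => S.powerset.filter fun I => Indep G I
  have hcover : F (A ∪ B) ⊆ (F A ×ˢ F B).image fun IJ => IJ.1 ∪ IJ.2 := by
    intro K hK
    simp only [F, mem_filter, mem_powerset] at hK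
    refine mem_image.2 ⟨(K ∩ A, K ∩ B), ?_, ?_⟩
    · simp only [F, mem_product, mem_filter, mem_powerset]
      exact ⟨⟨inter_subset_right, hK.2.mono inter_subset_left⟩,
        ⟨inter_subset_right, hK.2.mono inter_subset_left⟩⟩
    · rw [← inter_union_distrib_left, inter_eq_left.2 hK.1]
  have hnonneg : ∀ K : Finset (Fin n), 0 ≤ ∏ i ∈ K, y i := fun K => prod_nonneg fun i _ => hy i
  calc Yf G y (A ∪ B) ≤ ∑ K ∈ (F A ×ˢ F B).image (fun IJ => IJ.1 ∪ IJ.2), ∏ i ∈ K, y i :=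
        sum_le_sum_of_subset_of_nonneg hcover fun K _ _ => hnonneg K
    _ ≤ ∑ IJ ∈ F A ×ˢ F B, ∏ i ∈ IJ.1 ∪ IJ.2, y i := sum_image_le_of_nonneg fun K _ => hnonneg K
    _ = Yf G y A * Yf G y B := by
        rw [Yf, Yf, sum_mul_sum, ← sum_product']
        refine sum_congr rfl fun IJ hIJ => prod_union ?_
        simp only [mem_product, mem_filter, mem_powerset] at hIJ
        exact hAB.mono hIJ.1.1 hIJ.2.1

lemma Yf_compl_erase {a : Fin n} {S : Finset (Fin n)} (ha : a ∈ S) :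
    Yf G y (S.erase a)ᶜ = Yf G y Sᶜ + y a * Yf G y (Sᶜ \ Gp G a) := by
  rw [compl_erase, Yf_insert G (notMem_compl.2 ha)]

lemma Yf_compl_sdiff_le (hy : ∀ i, 0 ≤ y i) (S B : Finset (Fin n)) :
    Yf G y (S \ B)ᶜ ≤ Yf G y (Sᶜ \ B) * Yf G y B := by
  have hsplit : (S \ B)ᶜ = Sᶜ \ B ∪ B := by
    ext i
    simp only [mem_compl, mem_sdiff, mem_union]
    tauto
  rw [hsplit]
  exact Yf_union_le_mul G hy sdiff_disjoint

end IndependentSets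

section Avoidance

variable {Ω ι : Type*} [MeasurableSpace Ω] (μ : Measure Ω) (E : ι → Set Ω)

noncomputable def avoidProb (S : Finset ι) : ℝ :=
  μ.real (⋂ i ∈ S, (E i)ᶜ)

lemma avoidProb_empty [IsProbabilityMeasure μ] : avoidProb μ E ∅ = 1 := by
  simp [avoidProb]

lemma avoidProb_erase_le [DecidableEq ι] [IsFiniteMeasure μ] (S : Finset ι) (a : ι) :
    avoidProb μ E (S.erase a) ≤ avoidProb μ E S + μ.real (E a ∩ ⋂ i ∈ S.erase a, (E i)ᶜ) := by
  have hcover : ⋂ i ∈ S.erase a, (E i)ᶜ ⊆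
      (⋂ i ∈ S, (E i)ᶜ) ∪ (E a ∩ ⋂ i ∈ S.erase a, (E i)ᶜ) := by
    intro x hx
    by_cases hxa : x ∈ E a
    · exact Or.inr ⟨hxa, hx⟩
    · simp only [Set.mem_iInter, mem_erase] at hx
      refine Or.inl (Set.mem_iInter₂.2 fun i hi => ?_)
      by_cases hia : i = a
      · exact hia ▸ hxa
      · exact hx i ⟨hia, hi⟩
  exact (measureReal_mono hcover).trans (measureReal_union_le _ _)

lemma measureReal_inter_biInter_compl_anti [IsFiniteMeasure μ] (A : Set Ω) {D T : Finset ι}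
    (hDT : D ⊆ T) : μ.real (A ∩ ⋂ i ∈ T, (E i)ᶜ) ≤ μ.real (A ∩ ⋂ i ∈ D, (E i)ᶜ) :=
  measureReal_mono <|
    Set.inter_subset_inter_right A (Set.iInter₂_mono' fun i hi => ⟨i, hDT hi, le_rfl⟩)

end Avoidance

section ClusterExpansion

variable {Ω : Type*} [MeasurableSpace Ω] (μ : Measure Ω) {n : ℕ} (G : SimpleGraph (Fin n))
  [DecidableRel G.Adj] (E : Fin n → Set Ω) (p : Fin n → ℝ) {y : Fin n → ℝ}

def IsLopsidependent : Prop :=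
  ∀ i, ∀ J ⊆ univ \ Gp G i, 0 < avoidProb μ E J →
    μ.real (E i ∩ ⋂ j ∈ J, (E j)ᶜ) / avoidProb μ E J ≤ p i

variable {p}

lemma avoidProb_div_Yf_erase_le [IsFiniteMeasure μ]
    (hdep : IsLopsidependent μ G E p) (hy : ∀ i, 0 < y i) (hcl : ∀ i, p i ≤ y i / Yf G y (Gp G i))
    {S : Finset (Fin n)} {a : Fin n} (ha : a ∈ S) (hD : 0 < avoidProb μ E (S \ Gp G a))
    (hDT : avoidProb μ E (S \ Gp G a) / Yf G y (S \ Gp G a)ᶜ ≤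
      avoidProb μ E (S.erase a) / Yf G y (S.erase a)ᶜ) :
    avoidProb μ E (S.erase a) / Yf G y (S.erase a)ᶜ ≤ avoidProb μ E S / Yf G y Sᶜ := by
  set D := S \ Gp G a
  set T := S.erase a
  set P := avoidProb μ E
  have hY : ∀ U, 0 < Yf G y U := Yf_pos G fun i => (hy i).le
  have hdepD := hdep a D (sdiff_subset_sdiff (subset_univ S) subset_rfl) hD
  have hpa : 0 ≤ p a := (div_nonneg measureReal_nonneg hD.le).trans hdepD
  have hPT : P T ≤ P S + p a * P D := by
    refine (avoidProb_erase_le μ E S a).trans (add_le_add_right ?_ _)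
    exact (measureReal_inter_biInter_compl_anti μ E (E a) (sdiff_Gp_subset_erase G S a)).trans
      ((div_le_iff₀ hD).1 hdepD)
  have hcross : P D * Yf G y Tᶜ ≤ P T * Yf G y Dᶜ := (div_le_div_iff₀ (hY _) (hY _)).1 hDT
  have hYD : p a * Yf G y Dᶜ ≤ y a * Yf G y (Sᶜ \ Gp G a) := calc
    p a * Yf G y Dᶜ ≤ p a * (Yf G y (Sᶜ \ Gp G a) * Yf G y (Gp G a)) :=
      mul_le_mul_of_nonneg_left (Yf_compl_sdiff_le G (fun i => (hy i).le) S _) hpa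
    _ = (p a * Yf G y (Gp G a)) * Yf G y (Sᶜ \ Gp G a) := by ring
    _ ≤ y a * Yf G y (Sᶜ \ Gp G a) :=
      mul_le_mul_of_nonneg_right ((le_div_iff₀ (hY _)).1 (hcl a)) (hY _).le
  have hPT0 : 0 ≤ P T := measureReal_nonneg
  have hYT0 : 0 ≤ Yf G y Tᶜ := (hY _).le
  rw [div_le_div_iff₀ (hY _) (hY _)]
  calc P T * Yf G y Sᶜ = P T * Yf G y Tᶜ - P T * (y a * Yf G y (Sᶜ \ Gp G a)) := by
        rw [Yf_compl_erase G ha]; ring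
    _ ≤ (P S + p a * P D) * Yf G y Tᶜ - P T * (p a * Yf G y Dᶜ) := by gcongr
    _ = P S * Yf G y Tᶜ + p a * (P D * Yf G y Tᶜ - P T * Yf G y Dᶜ) := by ring
    _ ≤ P S * Yf G y Tᶜ :=
        add_le_of_nonpos_right (mul_nonpos_of_nonneg_of_nonpos hpa (sub_nonpos.2 hcross))

theorem avoidProb_pos_and_div_Yf_mono [IsProbabilityMeasure μ]
    (hdep : IsLopsidependent μ G E p) (hy : ∀ i, 0 < y i) (hcl : ∀ i, p i ≤ y i / Yf G y (Gp G i)) (S : Finset (Fin n)) :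
    0 < avoidProb μ E S ∧
      ∀ D ⊆ S, avoidProb μ E D / Yf G y Dᶜ ≤ avoidProb μ E S / Yf G y Sᶜ := by
  induction S using Finset.strongInduction with
  | H S ih =>
  have hY : ∀ U, 0 < Yf G y U := Yf_pos G fun i => (hy i).le
  have hstep : ∀ a ∈ S, avoidProb μ E (S.erase a) / Yf G y (S.erase a)ᶜ ≤
      avoidProb μ E S / Yf G y Sᶜ := by
    intro a ha
    have hDT := sdiff_Gp_subset_erase G S a
    have hD := (ih _ (Finset.ssubset_of_subset_of_ssubset hDT (erase_ssubset ha))).1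
    exact avoidProb_div_Yf_erase_le μ G E hdep hy hcl ha hD ((ih _ (erase_ssubset ha)).2 _ hDT)
  have hpos : 0 < avoidProb μ E S := by
    rcases S.eq_empty_or_nonempty with rfl | ⟨a, ha⟩
    · simp [avoidProb_empty]
    · have hT := div_pos (ih _ (erase_ssubset ha)).1 (hY (S.erase a)ᶜ)
      exact (div_pos_iff_of_pos_right (hY _)).1 (hT.trans_le (hstep a ha))
  refine ⟨hpos, fun D hDS => ?_⟩
  rcases eq_or_ssubset_of_subset hDS with rfl | hDS
  · exact le_rfl
  · obtain ⟨a, haS, haD⟩ := exists_of_ssubset hDS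
    exact ((ih _ (erase_ssubset haS)).2 D (subset_erase.2 ⟨hDS.subset, haD⟩)).trans (hstep a haS)

end ClusterExpansion

theorem cluster_expansion_induction_general {Ω : Type*} [MeasurableSpace Ω] (μ : Measure Ω) [IsProbabilityMeasure μ]
    {n : ℕ} (G : SimpleGraph (Fin n)) [DecidableRel G.Adj]
    (E : Fin n → Set Ω) (p : Fin n → ℝ)
    (hdep : ∀ i, ∀ J : Finset (Fin n), J ⊆ Finset.univ \ Gp G i →
      0 < (μ (⋂ j ∈ J, (E j)ᶜ)).toReal →
      (μ (E i ∩ ⋂ j ∈ J, (E j)ᶜ)).toReal / (μ (⋂ j ∈ J, (E j)ᶜ)).toReal ≤ p i)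
    (y : Fin n → ℝ) (hy : ∀ i, 0 < y i)
    (hcl : ∀ i, p i ≤ y i / Yf G y (Gp G i)) :
    ∀ S : Finset (Fin n), ∀ a ∈ S,
      0 < (μ (⋂ i ∈ S, (E i)ᶜ)).toReal ∧
      (μ (⋂ i ∈ S, (E i)ᶜ)).toReal / (μ (⋂ i ∈ S.erase a, (E i)ᶜ)).toReal ≥
        Yf G y (Finset.univ \ S) / Yf G y (Finset.univ \ S.erase a) := by
  intro S a ha
  have hY : ∀ U, 0 < Yf G y U := Yf_pos G fun i => (hy i).le
  obtain ⟨hS, hmono⟩ := avoidProb_pos_and_div_Yf_mono μ G E hdep hy hcl S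
  have hT := (avoidProb_pos_and_div_Yf_mono μ G E hdep hy hcl (S.erase a)).1
  have hratio := (div_le_div_iff₀ (hY _) (hY _)).1 (hmono _ (erase_subset a S))
  rw [compl_eq_univ_sdiff, compl_eq_univ_sdiff] at hratio
  exact ⟨hS, (div_le_div_iff₀ (hY _) hT).2 ((mul_comm _ _).trans_le hratio)⟩

theorem cluster_expansion_induction {Ω : Type*} [MeasurableSpace Ω] (μ : Measure Ω) [IsProbabilityMeasure μ]
    {n : ℕ} (G : SimpleGraph (Fin n)) [DecidableRel G.Adj]
    (E : Fin n → Set Ω) (hE : ∀ i, MeasurableSet (E i)) (p : Fin n → ℝ)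
    (hdep : ∀ i, ∀ J : Finset (Fin n), J ⊆ Finset.univ \ Gp G i →
      0 < (μ (⋂ j ∈ J, (E j)ᶜ)).toReal →
      (μ (E i ∩ ⋂ j ∈ J, (E j)ᶜ)).toReal / (μ (⋂ j ∈ J, (E j)ᶜ)).toReal ≤ p i)
    (y : Fin n → ℝ) (hy : ∀ i, 0 < y i)
    (hcl : ∀ i, p i ≤ y i / Yf G y (Gp G i)) :
    ∀ S : Finset (Fin n), ∀ a ∈ S,
      0 < (μ (⋂ i ∈ S, (E i)ᶜ)).toReal ∧
      (μ (⋂ i ∈ S, (E i)ᶜ)).toReal / (μ (⋂ i ∈ S.erase a, (E i)ᶜ)).toReal ≥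
        Yf G y (Finset.univ \ S) / Yf G y (Finset.univ \ S.erase a) :=
  cluster_expansion_induction_general μ G E p hdep y hy hcl
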